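/- arXiv:1501.06627 — 2 statements merged into one kernel-verified Lean document; each statement's English description precedes it below -/
import Mathlib

section
/- In an assignment problem where all agents have identical utility functions (u_{ij} = u_{i'j} for all agents i, i' and objects j), with each object valued positively, a complete discrete assignment x is CEEI-DISC if and only if all agents receive the same utility, i.e., u_i(x_i) = u_{i'}(x_{i'}) for all agents i and i'. -/
open Finset

/-- Utility an agent with (row) utility function `ui` derives from a (row) allocation `xi`. -/
noncomputable def utilOf {m : ℕ} (ui : Fin m → ℝ) (xi : Fin m → ℝ) : ℝ :=
  ∑ j, xi j * ui j

/-- A complete fractional assignment: entries in [0,1], every column (object) fully allocated. -/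
def IsFracAssignment {n m : ℕ} (x : Fin n → Fin m → ℝ) : Prop :=
  (∀ i j, 0 ≤ x i j ∧ x i j ≤ 1) ∧ (∀ j, ∑ i, x i j = 1)

/-- A complete discrete assignment: entries in {0,1}, every column (object) fully allocated. -/
def IsDiscreteAssignment {n m : ℕ} (x : Fin n → Fin m → ℝ) : Prop :=
  (∀ i j, x i j = 0 ∨ x i j = 1) ∧ (∀ j, ∑ i, x i j = 1)

/-- `x` is a CEEI-DISC assignment witnessed by the price vector `p`: prices are nonnegative,
and every agent's bundle is a discrete bundle of price at most 1 that maximizes the agent's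
utility among all discrete bundles of price at most 1. -/
noncomputable def CEEIDiscWith {n m : ℕ} (u : Fin n → Fin m → ℝ)
    (x : Fin n → Fin m → ℝ) (p : Fin m → ℝ) : Prop :=
  (∀ j, 0 ≤ p j) ∧
  ∀ i, (∀ j, x i j = 0 ∨ x i j = 1) ∧ (∑ j, x i j * p j ≤ 1) ∧
    ∀ y : Fin m → ℝ, (∀ j, y j = 0 ∨ y j = 1) → (∑ j, y j * p j ≤ 1) →
      utilOf (u i) y ≤ utilOf (u i) (x i)

noncomputable def CEEIDisc {n m : ℕ} (u : Fin n → Fin m → ℝ)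
    (x : Fin n → Fin m → ℝ) : Prop :=
  ∃ p : Fin m → ℝ, CEEIDiscWith u x p

/-- `x` is a CEEI-FRAC assignment witnessed by the price vector `p`: prices are nonnegative,
and every agent's bundle lies in [0,1]^m, costs at most 1, and maximizes the agent's utility
among all fractional bundles of price at most 1. -/
noncomputable def CEEIFracWith {n m : ℕ} (u : Fin n → Fin m → ℝ)
    (x : Fin n → Fin m → ℝ) (p : Fin m → ℝ) : Prop :=
  (∀ j, 0 ≤ p j) ∧
  ∀ i, (∀ j, 0 ≤ x i j ∧ x i j ≤ 1) ∧ (∑ j, x i j * p j ≤ 1) ∧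
    ∀ y : Fin m → ℝ, (∀ j, 0 ≤ y j ∧ y j ≤ 1) → (∑ j, y j * p j ≤ 1) →
      utilOf (u i) y ≤ utilOf (u i) (x i)

noncomputable def CEEIFrac {n m : ℕ} (u : Fin n → Fin m → ℝ)
    (x : Fin n → Fin m → ℝ) : Prop :=
  ∃ p : Fin m → ℝ, CEEIFracWith u x p

/-- The Nash welfare of an assignment. -/
noncomputable def nash {n m : ℕ} (u : Fin n → Fin m → ℝ)
    (x : Fin n → Fin m → ℝ) : ℝ :=
  ∏ i, utilOf (u i) (x i)

/-!
Identical agents never envy each other in a CEEI-DISC assignment, so they all get the same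
utility. Conversely, the utilities of a complete assignment add up to `∑ j, v j`, which is
positive unless there are no objects, so the common utility `U` is positive. At the prices
`v j / U` a bundle costs its utility divided by `U`: every agent's bundle costs exactly `1`,
and every affordable bundle is worth at most `U`.
-/

variable {n m : ℕ}

theorem CEEIDiscWith.utilOf_le {u x : Fin n → Fin m → ℝ} {p : Fin m → ℝ}
    (h : CEEIDiscWith u x p) (i i' : Fin n) : utilOf (u i) (x i') ≤ utilOf (u i) (x i) :=
  (h.2 i).2.2 _ (h.2 i').1 (h.2 i').2.1

theorem sum_utilOf_eq_sum_of_sum_eq_one (v : Fin m → ℝ) {x : Fin n → Fin m → ℝ}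
    (hx : ∀ j, ∑ i, x i j = 1) : ∑ i, utilOf v (x i) = ∑ j, v j := by
  simp only [utilOf]
  rw [sum_comm]
  simp [← sum_mul, hx]

theorem exists_utilOf_pos [Nonempty (Fin m)] {v : Fin m → ℝ} (hv : ∀ j, 0 < v j)
    {x : Fin n → Fin m → ℝ} (hx : ∀ j, ∑ i, x i j = 1) : ∃ i, 0 < utilOf v (x i) := by
  have hsum : ∑ _i : Fin n, (0 : ℝ) < ∑ i, utilOf v (x i) := by
    rw [sum_utilOf_eq_sum_of_sum_eq_one v hx, sum_const_zero]
    exact sum_pos (fun j _ => hv j) univ_nonempty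
  obtain ⟨i, -, hi⟩ := exists_lt_of_sum_lt hsum
  exact ⟨i, hi⟩

theorem sum_mul_div_eq_utilOf_div (v y : Fin m → ℝ) (U : ℝ) :
    ∑ j, y j * (v j / U) = utilOf v y / U := by
  simp [utilOf, sum_div, mul_div_assoc]

theorem ceeiDiscWith_div_of_utilOf_eq {v : Fin m → ℝ} (hv : ∀ j, 0 ≤ v j)
    {x : Fin n → Fin m → ℝ} (hx : ∀ i j, x i j = 0 ∨ x i j = 1) {U : ℝ} (hU : 0 < U)
    (hxU : ∀ i, utilOf v (x i) = U) :
    CEEIDiscWith (fun _ => v) x (fun j => v j / U) := by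
  refine ⟨fun j => div_nonneg (hv j) hU.le, fun i => ⟨hx i, ?_, fun y _ hy => ?_⟩⟩
  · rw [sum_mul_div_eq_utilOf_div, hxU i, div_self hU.ne']
  · rw [sum_mul_div_eq_utilOf_div, div_le_one hU] at hy
    rwa [hxU i]

/-- With identical utility functions (each object valued positively), a complete discrete
assignment is CEEI-DISC iff all agents receive the same utility. -/
theorem ceei_disc_iff_equal_utilities (n m : ℕ) (v : Fin m → ℝ) (hv : ∀ j, 0 < v j)
    (u : Fin n → Fin m → ℝ) (hu : ∀ i j, u i j = v j)
    (x : Fin n → Fin m → ℝ) (hx : IsDiscreteAssignment x) :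
    CEEIDisc u x ↔ ∀ i i', utilOf (u i) (x i) = utilOf (u i') (x i') := by
  obtain rfl : u = fun _ => v := funext fun i => funext (hu i)
  constructor
  · rintro ⟨p, hp⟩ i i'
    exact le_antisymm (hp.utilOf_le i' i) (hp.utilOf_le i i')
  · intro heq
    rcases isEmpty_or_nonempty (Fin m) with hm | hm
    · exact ⟨0, by simp [CEEIDiscWith, utilOf]⟩
    obtain ⟨i₀, hi₀⟩ := exists_utilOf_pos hv hx.2
    exact ⟨_, ceeiDiscWith_div_of_utilOf_eq (fun j => (hv j).le) hx.1 hi₀ (fun i => heq i i₀)⟩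
end

section
/- In an assignment problem with n agents where all agents have identical utility functions with u_j > 0 for every object j and Σ_{j=1}^m u_j = T, every CEEI-FRAC fractional assignment gives every agent utility exactly T/n. -/
open Finset

/-!
Every agent can afford every other agent's bundle at the equilibrium prices, so a CEEI-FRAC
assignment is envy-free. With identical utilities this forces all agents to the same utility,
and since the assignment is complete these utilities add up to the total value `T`.
-/

theorem CEEIFrac.envy_free {n m : ℕ} {u x : Fin n → Fin m → ℝ} (hc : CEEIFrac u x)
    (a b : Fin n) : utilOf (u b) (x a) ≤ utilOf (u b) (x b) := by
  obtain ⟨p, -, hmax⟩ := hc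
  obtain ⟨hbounds, hbudget, -⟩ := hmax a
  exact (hmax b).2.2 (x a) hbounds hbudget

theorem CEEIFrac.utilOf_eq_of_identical {n m : ℕ} {v : Fin m → ℝ} {x : Fin n → Fin m → ℝ}
    (hc : CEEIFrac (fun _ => v) x) (a b : Fin n) : utilOf v (x a) = utilOf v (x b) :=
  le_antisymm (hc.envy_free a b) (hc.envy_free b a)

theorem sum_utilOf_eq_sum {n m : ℕ} (v : Fin m → ℝ) {x : Fin n → Fin m → ℝ}
    (hcomplete : ∀ j, ∑ i, x i j = 1) : ∑ i, utilOf v (x i) = ∑ j, v j := by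
  simp only [utilOf]
  rw [Finset.sum_comm]
  exact Finset.sum_congr rfl fun j _ => by rw [← Finset.sum_mul, hcomplete j, one_mul]

theorem ceei_frac_identical_utilities_general (n m : ℕ) (v : Fin m → ℝ)
    (T : ℝ) (hT : ∑ j, v j = T)
    (u : Fin n → Fin m → ℝ) (hu : ∀ i j, u i j = v j)
    (x : Fin n → Fin m → ℝ) (hx : IsFracAssignment x) (hc : CEEIFrac u x) :
    ∀ i, utilOf (u i) (x i) = T / n := by
  intro i
  obtain rfl : u = fun _ => v := funext fun a => funext (hu a)
  have hn : (n : ℝ) ≠ 0 := Nat.cast_ne_zero.mpr (Fin.pos i).ne'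
  have htotal : ∑ a, utilOf v (x a) = n * utilOf v (x i) := by
    rw [Finset.sum_congr rfl fun a _ => hc.utilOf_eq_of_identical a i, Finset.sum_const,
      Finset.card_univ, Fintype.card_fin, nsmul_eq_mul]
  rw [eq_div_iff hn, mul_comm, ← htotal, sum_utilOf_eq_sum v hx.2, hT]

/-- With identical, everywhere-positive utility functions summing to T, every CEEI-FRAC
fractional assignment gives every agent utility exactly T/n. -/
theorem ceei_frac_identical_utilities (n m : ℕ) (v : Fin m → ℝ) (hv : ∀ j, 0 < v j)
    (T : ℝ) (hT : ∑ j, v j = T)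
    (u : Fin n → Fin m → ℝ) (hu : ∀ i j, u i j = v j)
    (x : Fin n → Fin m → ℝ) (hx : IsFracAssignment x) (hc : CEEIFrac u x) :
    ∀ i, utilOf (u i) (x i) = T / n :=
  ceei_frac_identical_utilities_general n m v T hT u hu x hx hc
end
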